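/- Let M > 0, μ > M + L_g‖L_p‖ and δ ≥ 0. Let x̄ ∈ C, set D := ((p+1)!(f(x̄) − f^*)/μ)^{1/(p+1)}, let y be a global minimizer over C of y ↦ f(y) + (μ/(p+1)!)‖y − x̄‖^{p+1}, and let x⁺ ∈ C satisfy the inexact optimality condition s_M(x⁺; x̄) − inf{ s_M(z; x̄) : z ∈ C, ‖z − x̄‖ ≤ D } ≤ (δ/(p+1)!)‖x⁺ − x̄‖^{p+1}. Then ‖y − x̄‖^{p+1} ≤ L_μ ‖x⁺ − x̄‖^{p+1}, where L_μ := (μ + δ + L_g‖L_p‖ − M)/(μ − (M + L_g‖L_p‖)). -/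

import Mathlib

/-!
Since `D^p F_i` is `L_p^i`-Lipschitz, Taylor's formula with integral remainder gives
`|F_i z - T_p^{F_i}(z; x̄)| ≤ L_p^i ‖z - x̄‖^{p+1} / (p+1)!`, hence, `g` being `L_g`-Lipschitz,
`s_M(z; x̄)` lies within `L_g ‖L_p‖ ‖z - x̄‖^{p+1} / (p+1)!` of `f z + M ‖z - x̄‖^{p+1} / (p+1)!`.
Testing the minimality of `y` against `x̄` and using `f ≥ f^*` gives `‖y - x̄‖ ≤ D`, so `y` is a
competitor in the infimum of the inexactness condition. Chaining the minimality of `y` against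
`x⁺`, the lower model bound at `x⁺`, the inexactness condition and the upper model bound at `y`
yields `(μ - M - L_g‖L_p‖) ‖y - x̄‖^{p+1} ≤ (μ + δ + L_g‖L_p‖ - M) ‖x⁺ - x̄‖^{p+1}`.
-/

open scoped BigOperators RealInnerProductSpace

noncomputable section

/-- The vector `(F_1(x), …, F_m(x)) ∈ ℝ^m` (with the Euclidean norm). -/
def euclMap {n m : ℕ} (F : Fin m → EuclideanSpace ℝ (Fin n) → ℝ)
    (x : EuclideanSpace ℝ (Fin n)) : EuclideanSpace ℝ (Fin m) :=
  (EuclideanSpace.equiv (Fin m) ℝ).symm fun i => F i x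

/-- The vector `T_p^F(y; x)` of `p`-th order Taylor approximations of the components
`F_i` around the center `x`, evaluated at `y`. -/
def taylorMap (p : ℕ) {n m : ℕ} (F : Fin m → EuclideanSpace ℝ (Fin n) → ℝ)
    (y x : EuclideanSpace ℝ (Fin n)) : EuclideanSpace ℝ (Fin m) :=
  (EuclideanSpace.equiv (Fin m) ℝ).symm fun i =>
    ∑ j ∈ Finset.range (p + 1),
      (1 / (Nat.factorial j : ℝ)) * iteratedFDeriv ℝ j (F i) x (fun _ => y - x)

/-- The composite objective `f(x) = g(F(x)) + h(x)`. -/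
def fObj {n m : ℕ} (F : Fin m → EuclideanSpace ℝ (Fin n) → ℝ)
    (g : EuclideanSpace ℝ (Fin m) → ℝ) (h : EuclideanSpace ℝ (Fin n) → ℝ)
    (x : EuclideanSpace ℝ (Fin n)) : ℝ :=
  g (euclMap F x) + h x

/-- The regularized higher-order Taylor model
`s_M(y; x̄) = g(T_p^F(y; x̄)) + (M/(p+1)!)‖y − x̄‖^{p+1} + h(y)`. -/
def sModel (p : ℕ) {n m : ℕ} (F : Fin m → EuclideanSpace ℝ (Fin n) → ℝ)
    (g : EuclideanSpace ℝ (Fin m) → ℝ) (h : EuclideanSpace ℝ (Fin n) → ℝ) (M : ℝ)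
    (y xb : EuclideanSpace ℝ (Fin n)) : ℝ :=
  g (taylorMap p F y xb) + M / (Nat.factorial (p + 1) : ℝ) * ‖y - xb‖ ^ (p + 1) + h y

open Nat

section Taylor

theorem integral_one_sub_pow (n : ℕ) : ∫ t in (0 : ℝ)..1, (1 - t) ^ n = 1 / (n + 1) := by
  rw [intervalIntegral.integral_comp_sub_left (fun t : ℝ => t ^ n), integral_pow]
  norm_num

theorem integral_one_sub_pow_mul_self (n : ℕ) :
    ∫ t in (0 : ℝ)..1, (1 - t) ^ n * t = 1 / ((n + 1) * (n + 2)) := by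
  have h := intervalIntegral.integral_comp_sub_left
    (fun t : ℝ => t ^ n - t ^ (n + 1)) (a := 0) (b := 1) 1
  simp only [sub_zero, sub_self] at h
  convert h using 1
  · congr 1; ext t; ring
  rw [intervalIntegral.integral_sub (intervalIntegral.intervalIntegrable_pow _)
    (intervalIntegral.intervalIntegrable_pow _), integral_pow, integral_pow]
  push_cast
  field_simp
  ring

variable {E F : Type*} [NormedAddCommGroup E] [NormedSpace ℝ E]
  [NormedAddCommGroup F] [NormedSpace ℝ F] [CompleteSpace F]

theorem sub_taylor_eq_integral_sub_iteratedFDeriv {f : E → F} {n : ℕ}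
    (hf : ContDiff ℝ (n + 1) f) (x y : E) :
    f (x + y) - ∑ k ∈ Finset.range (n + 2), (k ! : ℝ)⁻¹ • iteratedFDeriv ℝ k f x (fun _ ↦ y) =
      (n ! : ℝ)⁻¹ • ∫ t in 0..1, (1 - t) ^ n •
        (iteratedFDeriv ℝ (n + 1) f (x + t • y) - iteratedFDeriv ℝ (n + 1) f x) (fun _ ↦ y) := by
  have hlast : ((n + 1)! : ℝ)⁻¹ • iteratedFDeriv ℝ (n + 1) f x (fun _ ↦ y) =
      (n ! : ℝ)⁻¹ • ∫ t in 0..1, (1 - t) ^ n • iteratedFDeriv ℝ (n + 1) f x (fun _ ↦ y) := by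
    rw [intervalIntegral.integral_smul_const, integral_one_sub_pow, smul_smul, Nat.factorial_succ]
    push_cast
    field_simp
  simp only [sub_apply, smul_sub]
  rw [intervalIntegral.integral_sub, smul_sub, ← hlast, Finset.sum_range_succ,
    map_add_eq_sum_add_integral_iteratedFDeriv fun t _ ↦ hf.contDiffAt]
  · abel
  all_goals exact Continuous.intervalIntegrable (by fun_prop) _ _

theorem norm_sub_taylor_le_of_lipschitz_iteratedFDeriv {f : E → F} {n : ℕ} {K : ℝ}
    (hf : ContDiff ℝ (n + 1) f)
    (hK : ∀ a b, ‖iteratedFDeriv ℝ (n + 1) f a - iteratedFDeriv ℝ (n + 1) f b‖ ≤ K * ‖a - b‖)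
    (x y : E) :
    ‖f (x + y) - ∑ k ∈ Finset.range (n + 2), (k ! : ℝ)⁻¹ • iteratedFDeriv ℝ k f x (fun _ ↦ y)‖ ≤
      K * ‖y‖ ^ (n + 2) / (n + 2)! := by
  have hpt : ∀ t ∈ Set.Ioc (0 : ℝ) 1, ‖(1 - t) ^ n •
      (iteratedFDeriv ℝ (n + 1) f (x + t • y) - iteratedFDeriv ℝ (n + 1) f x) (fun _ ↦ y)‖ ≤
      K * ‖y‖ ^ (n + 2) * ((1 - t) ^ n * t) := by
    rintro t ⟨ht0, ht1⟩
    have hlip : ‖iteratedFDeriv ℝ (n + 1) f (x + t • y) - iteratedFDeriv ℝ (n + 1) f x‖ ≤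
        K * t * ‖y‖ := by
      simpa [norm_smul, abs_of_pos ht0, mul_assoc] using hK (x + t • y) x
    have happly := ContinuousMultilinearMap.le_opNorm
      (iteratedFDeriv ℝ (n + 1) f (x + t • y) - iteratedFDeriv ℝ (n + 1) f x) (fun _ ↦ y)
    rw [Finset.prod_const, Finset.card_univ, Fintype.card_fin] at happly
    rw [norm_smul, Real.norm_of_nonneg (pow_nonneg (by linarith) n)]
    calc _ ≤ (1 - t) ^ n * (K * t * ‖y‖ * ‖y‖ ^ (n + 1)) := by
          gcongr
          exact happly.trans (by gcongr)
      _ = _ := by ring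
  rw [sub_taylor_eq_integral_sub_iteratedFDeriv hf, norm_smul]
  calc _ ≤ ‖(n ! : ℝ)⁻¹‖ * ∫ t in (0 : ℝ)..1, K * ‖y‖ ^ (n + 2) * ((1 - t) ^ n * t) := by
        gcongr
        refine intervalIntegral.norm_integral_le_of_norm_le zero_le_one
          (Filter.Eventually.of_forall hpt) (Continuous.intervalIntegrable (by fun_prop) _ _)
    _ = _ := by
        rw [intervalIntegral.integral_const_mul, integral_one_sub_pow_mul_self, norm_inv,
          Real.norm_natCast, Nat.factorial_succ, Nat.factorial_succ]
        push_cast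
        field_simp
        ring

end Taylor

theorem nonneg_of_abs_sub_le_mul_norm {E : Type*} [NormedAddCommGroup E] [Nontrivial E]
    {g : E → ℝ} {L : ℝ} (hg : ∀ a b, |g a - g b| ≤ L * ‖a - b‖) : 0 ≤ L := by
  obtain ⟨a, ha⟩ := exists_ne (0 : E)
  have hLa : 0 ≤ L * ‖a‖ := by simpa using (abs_nonneg _).trans (hg a 0)
  exact nonneg_of_mul_nonneg_left hLa (norm_pos_iff.mpr ha)

theorem EuclideanSpace.norm_le_norm_mul_of_abs_le {ι : Type*} [Fintype ι]
    {u w : EuclideanSpace ℝ ι} {c : ℝ} (hc : 0 ≤ c) (h : ∀ i, |u i| ≤ w i * c) :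
    ‖u‖ ≤ ‖w‖ * c := by
  rw [EuclideanSpace.norm_eq, EuclideanSpace.norm_eq, ← Real.sqrt_sq hc,
    ← Real.sqrt_mul (by positivity), Finset.sum_mul]
  gcongr with i
  rw [← mul_pow, Real.norm_eq_abs, Real.norm_eq_abs]
  exact pow_le_pow_left₀ (abs_nonneg _) ((h i).trans (by gcongr; exact le_abs_self _)) 2

theorem norm_sub_le_rpow_of_add_norm_sub_pow_le {E : Type*} [NormedAddCommGroup E]
    {f : E → ℝ} {c fstar : ℝ} {r : ℕ} {x y : E} (hc : 0 < c) (hy : fstar ≤ f y)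
    (hxy : f y + c * ‖y - x‖ ^ (r + 1) ≤ f x) :
    ‖y - x‖ ≤ ((f x - fstar) / c) ^ ((1 : ℝ) / (r + 1)) := by
  have hgap : c * ‖y - x‖ ^ (r + 1) ≤ f x - fstar := by linarith
  rw [one_div, Real.le_rpow_inv_iff_of_pos (norm_nonneg _)
    (div_nonneg ((by positivity : 0 ≤ c * _).trans hgap) hc.le) (by positivity), le_div_iff₀ hc]
  exact_mod_cast (by linarith : ‖y - x‖ ^ (r + 1) * c ≤ f x - fstar)

section Model

variable {n m p : ℕ} {F : Fin m → EuclideanSpace ℝ (Fin n) → ℝ} {Lp : EuclideanSpace ℝ (Fin m)}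
  {g : EuclideanSpace ℝ (Fin m) → ℝ} {Lg : ℝ}

theorem abs_comp_euclMap_sub_comp_taylorMap_le (hp : 1 ≤ p) (hFd : ∀ i, ContDiff ℝ p (F i))
    (hFlip : ∀ i (x y : EuclideanSpace ℝ (Fin n)),
      ‖iteratedFDeriv ℝ p (F i) x - iteratedFDeriv ℝ p (F i) y‖ ≤ Lp i * ‖x - y‖)
    (hLg : 0 ≤ Lg) (hglip : ∀ a b : EuclideanSpace ℝ (Fin m), |g a - g b| ≤ Lg * ‖a - b‖)
    (z xb : EuclideanSpace ℝ (Fin n)) :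
    |g (euclMap F z) - g (taylorMap p F z xb)| ≤
      Lg * ‖Lp‖ / (p + 1)! * ‖z - xb‖ ^ (p + 1) := by
  obtain ⟨q, rfl⟩ : ∃ q, p = q + 1 := ⟨p - 1, by omega⟩
  have hcoord : ∀ i, |(euclMap F z - taylorMap (q + 1) F z xb) i| ≤
      Lp i * (‖z - xb‖ ^ (q + 2) / (q + 2)!) := by
    intro i
    have := norm_sub_taylor_le_of_lipschitz_iteratedFDeriv (by exact_mod_cast hFd i) (hFlip i)
      xb (z - xb)
    simpa [taylorMap, euclMap, one_div, smul_eq_mul, mul_div_assoc] using this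
  calc |g (euclMap F z) - g (taylorMap (q + 1) F z xb)|
      ≤ Lg * ‖euclMap F z - taylorMap (q + 1) F z xb‖ := hglip _ _
    _ ≤ Lg * (‖Lp‖ * (‖z - xb‖ ^ (q + 2) / (q + 2)!)) := by
        gcongr
        exact EuclideanSpace.norm_le_norm_mul_of_abs_le (by positivity) hcoord
    _ = _ := by ring

theorem abs_sModel_sub_fObj_le (hp : 1 ≤ p) (hFd : ∀ i, ContDiff ℝ p (F i))
    (hFlip : ∀ i (x y : EuclideanSpace ℝ (Fin n)),
      ‖iteratedFDeriv ℝ p (F i) x - iteratedFDeriv ℝ p (F i) y‖ ≤ Lp i * ‖x - y‖)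
    (hLg : 0 ≤ Lg) (hglip : ∀ a b : EuclideanSpace ℝ (Fin m), |g a - g b| ≤ Lg * ‖a - b‖)
    (h : EuclideanSpace ℝ (Fin n) → ℝ) (M : ℝ) (z xb : EuclideanSpace ℝ (Fin n)) :
    |sModel p F g h M z xb - (fObj F g h z + M / (p + 1)! * ‖z - xb‖ ^ (p + 1))| ≤
      Lg * ‖Lp‖ / (p + 1)! * ‖z - xb‖ ^ (p + 1) := by
  rw [abs_sub_comm]
  convert abs_comp_euclMap_sub_comp_taylorMap_le hp hFd hFlip hLg hglip z xb using 2
  simp only [sModel, fObj]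
  ring

theorem bddBelow_sModel_image (hp : 1 ≤ p) (hFd : ∀ i, ContDiff ℝ p (F i))
    (hFlip : ∀ i (x y : EuclideanSpace ℝ (Fin n)),
      ‖iteratedFDeriv ℝ p (F i) x - iteratedFDeriv ℝ p (F i) y‖ ≤ Lp i * ‖x - y‖)
    (hLg : 0 ≤ Lg) (hglip : ∀ a b : EuclideanSpace ℝ (Fin m), |g a - g b| ≤ Lg * ‖a - b‖)
    {h : EuclideanSpace ℝ (Fin n) → ℝ} {C : Set (EuclideanSpace ℝ (Fin n))} {fstar M : ℝ}
    (hlb : ∀ x ∈ C, fstar ≤ fObj F g h x) (hM : 0 ≤ M) (xb : EuclideanSpace ℝ (Fin n)) (D : ℝ) :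
    BddBelow ((fun z => sModel p F g h M z xb) '' {z | z ∈ C ∧ ‖z - xb‖ ≤ D}) := by
  refine ⟨fstar - Lg * ‖Lp‖ / (p + 1)! * D ^ (p + 1), ?_⟩
  rintro _ ⟨z, ⟨hzC, hzD⟩, rfl⟩
  have hball : Lg * ‖Lp‖ / (p + 1)! * ‖z - xb‖ ^ (p + 1) ≤
      Lg * ‖Lp‖ / (p + 1)! * D ^ (p + 1) := by
    gcongr
  have hreg : 0 ≤ M / (p + 1)! * ‖z - xb‖ ^ (p + 1) := by positivity
  linarith [(abs_le.mp (abs_sModel_sub_fObj_le hp hFd hFlip hLg hglip h M z xb)).1, hlb z hzC]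

end Model

theorem stmt3_general {n m : ℕ} (hm : 1 ≤ m) (p : ℕ) (hp : 1 ≤ p)
    (F : Fin m → EuclideanSpace ℝ (Fin n) → ℝ)
    (Lp : EuclideanSpace ℝ (Fin m))
    (hFd : ∀ i, ContDiff ℝ p (F i))
    (hFlip : ∀ i (x y : EuclideanSpace ℝ (Fin n)),
      ‖iteratedFDeriv ℝ p (F i) x - iteratedFDeriv ℝ p (F i) y‖ ≤ Lp i * ‖x - y‖)
    (g : EuclideanSpace ℝ (Fin m) → ℝ) (Lg : ℝ)
    (hglip : ∀ a b : EuclideanSpace ℝ (Fin m), |g a - g b| ≤ Lg * ‖a - b‖)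
    (C : Set (EuclideanSpace ℝ (Fin n)))
    (h : EuclideanSpace ℝ (Fin n) → ℝ)
    (fstar : ℝ) (hlb : ∀ x ∈ C, fstar ≤ fObj F g h x)
    (M μ δ : ℝ) (hM : 0 < M) (hμ : M + Lg * ‖Lp‖ < μ)
    (xb : EuclideanSpace ℝ (Fin n)) (hxb : xb ∈ C)
    (D : ℝ) (hD : D = ((Nat.factorial (p + 1) : ℝ) * (fObj F g h xb - fstar) / μ) ^
      ((1 : ℝ) / (p + 1)))
    (y : EuclideanSpace ℝ (Fin n)) (hyC : y ∈ C)
    (hy : ∀ z ∈ C,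
      fObj F g h y + μ / (Nat.factorial (p + 1) : ℝ) * ‖y - xb‖ ^ (p + 1) ≤
      fObj F g h z + μ / (Nat.factorial (p + 1) : ℝ) * ‖z - xb‖ ^ (p + 1))
    (xp : EuclideanSpace ℝ (Fin n)) (hxp : xp ∈ C)
    (hinx : sModel p F g h M xp xb -
        sInf ((fun z => sModel p F g h M z xb) '' {z | z ∈ C ∧ ‖z - xb‖ ≤ D}) ≤
      δ / (Nat.factorial (p + 1) : ℝ) * ‖xp - xb‖ ^ (p + 1))
    (Lμ : ℝ) (hLμ : Lμ = (μ + δ + Lg * ‖Lp‖ - M) / (μ - (M + Lg * ‖Lp‖))) :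
    ‖y - xb‖ ^ (p + 1) ≤ Lμ * ‖xp - xb‖ ^ (p + 1) := by
  have hk : (0 : ℝ) < (p + 1)! := by positivity
  have : Nonempty (Fin m) := ⟨⟨0, hm⟩⟩
  have hLg : 0 ≤ Lg := nonneg_of_abs_sub_le_mul_norm hglip
  have hμ0 : 0 < μ := by linarith [mul_nonneg hLg (norm_nonneg Lp)]
  have hmodel z := abs_le.mp (abs_sModel_sub_fObj_le hp hFd hFlip hLg hglip h M z xb)
  have hyD : ‖y - xb‖ ≤ D := by
    have := norm_sub_le_rpow_of_add_norm_sub_pow_le (by positivity : 0 < μ / (p + 1)!)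
      (hlb y hyC) (by simpa using hy xb hxb)
    rwa [div_div_eq_mul_div, mul_comm, ← hD] at this
  have hsInf := csInf_le (bddBelow_sModel_image hp hFd hFlip hLg hglip hlb hM.le xb D)
    ⟨y, ⟨hyC, hyD⟩, rfl⟩
  have key : (μ - (M + Lg * ‖Lp‖)) / (p + 1)! * ‖y - xb‖ ^ (p + 1) ≤
      (μ + δ + Lg * ‖Lp‖ - M) / (p + 1)! * ‖xp - xb‖ ^ (p + 1) := by
    linear_combination hy xp hxp + (hmodel xp).1 + hinx + hsInf + (hmodel y).2
  rw [div_mul_eq_mul_div, div_mul_eq_mul_div, div_le_div_iff_of_pos_right hk] at key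
  rw [hLμ, div_mul_eq_mul_div, le_div_iff₀ (by linarith)]
  linarith

/-- the proximal point `y` of the true objective stays within a
controlled distance of the inexact RHOTA step `xp`:
`‖y − x̄‖^{p+1} ≤ L_μ ‖x⁺ − x̄‖^{p+1}`. -/
theorem stmt3 {n m : ℕ} (hn : 1 ≤ n) (hm : 1 ≤ m) (p : ℕ) (hp : 1 ≤ p)
    (F : Fin m → EuclideanSpace ℝ (Fin n) → ℝ)
    (Lp : EuclideanSpace ℝ (Fin m))
    (hFd : ∀ i, ContDiff ℝ p (F i))
    (hFlip : ∀ i (x y : EuclideanSpace ℝ (Fin n)),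
      ‖iteratedFDeriv ℝ p (F i) x - iteratedFDeriv ℝ p (F i) y‖ ≤ Lp i * ‖x - y‖)
    (g : EuclideanSpace ℝ (Fin m) → ℝ) (Lg : ℝ)
    (hgconv : ConvexOn ℝ Set.univ g)
    (hglip : ∀ a b : EuclideanSpace ℝ (Fin m), |g a - g b| ≤ Lg * ‖a - b‖)
    (C : Set (EuclideanSpace ℝ (Fin n))) (hCne : C.Nonempty) (hCcl : IsClosed C)
    (hCcv : Convex ℝ C)
    (h : EuclideanSpace ℝ (Fin n) → ℝ) (hhconv : ConvexOn ℝ Set.univ h)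
    (hhlsc : LowerSemicontinuous h)
    (fstar : ℝ) (hlb : ∀ x ∈ C, fstar ≤ fObj F g h x)
    (M μ δ : ℝ) (hM : 0 < M) (hμ : M + Lg * ‖Lp‖ < μ) (hδ : 0 ≤ δ)
    (xb : EuclideanSpace ℝ (Fin n)) (hxb : xb ∈ C)
    (D : ℝ) (hD : D = ((Nat.factorial (p + 1) : ℝ) * (fObj F g h xb - fstar) / μ) ^
      ((1 : ℝ) / (p + 1)))
    (y : EuclideanSpace ℝ (Fin n)) (hyC : y ∈ C)
    (hy : ∀ z ∈ C,
      fObj F g h y + μ / (Nat.factorial (p + 1) : ℝ) * ‖y - xb‖ ^ (p + 1) ≤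
      fObj F g h z + μ / (Nat.factorial (p + 1) : ℝ) * ‖z - xb‖ ^ (p + 1))
    (xp : EuclideanSpace ℝ (Fin n)) (hxp : xp ∈ C)
    (hinx : sModel p F g h M xp xb -
        sInf ((fun z => sModel p F g h M z xb) '' {z | z ∈ C ∧ ‖z - xb‖ ≤ D}) ≤
      δ / (Nat.factorial (p + 1) : ℝ) * ‖xp - xb‖ ^ (p + 1))
    (Lμ : ℝ) (hLμ : Lμ = (μ + δ + Lg * ‖Lp‖ - M) / (μ - (M + Lg * ‖Lp‖))) :
    ‖y - xb‖ ^ (p + 1) ≤ Lμ * ‖xp - xb‖ ^ (p + 1) :=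
  stmt3_general hm p hp F Lp hFd hFlip g Lg hglip C h fstar hlb M μ δ hM hμ xb hxb D hD y hyC hy xp
    hxp hinx Lμ hLμ

end
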